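/- arXiv:1711.00904 — 5 statements merged into one kernel-verified Lean document; each statement's English description precedes it below -/
import Mathlib

section
/- Let c ∈ K be nonzero, char K ≠ 2, and define H : K⁴ → K⁴ by H = (x₁x₃ + c x₂x₄, x₂x₃ − x₁x₄, ½x₃² + (c/2)x₄², ½x₁² + (c/2)x₂²). Then the Jacobian matrix J H has determinant zero, and moreover rank(J H) ≤ 3 over the function field K(x₁,x₂,x₃,x₄). -/
/-!
`J H` annihilates the vector `(c x₂, -x₁, c x₄, -x₃)`, whose second entry `-x₁` is nonzero both
in `K[x₁, x₂, x₃, x₄]` and in its fraction field. A square matrix over a domain with a nonzero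
kernel vector has determinant zero, and a matrix over a field with one has rank below its width.
-/

open MvPolynomial Matrix

theorem Matrix.rank_lt_card_of_mulVec_eq_zero {F m n : Type*} [Field F] [Fintype n]
    (A : Matrix m n F) {v : n → F} (hv : v ≠ 0) (hAv : A *ᵥ v = 0) :
    A.rank < Fintype.card n := by
  have hker : 0 < Module.finrank F (LinearMap.ker A.mulVecLin) :=
    Module.finrank_pos_iff_exists_ne_zero.mpr ⟨⟨v, hAv⟩, fun h => hv (congrArg Subtype.val h)⟩
  have hdim := A.mulVecLin.finrank_range_add_finrank_ker
  rw [Module.finrank_fintype_fun_eq_card] at hdim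
  rw [Matrix.rank]
  omega

section

variable {R : Type*} [CommRing R]

/-- The matrix `J H` of the statement, with `c` and the point `x` in an arbitrary ring. -/
def jacobianH (c : R) (x : Fin 4 → R) : Matrix (Fin 4) (Fin 4) R :=
  !![x 2, c * x 3, x 0, c * x 1;
     -x 3, x 2, x 1, -x 0;
     0, 0, x 2, c * x 3;
     x 0, c * x 1, 0, 0]

theorem jacobianH_mulVec (c : R) (x : Fin 4 → R) :
    jacobianH c x *ᵥ ![c * x 1, -x 0, c * x 3, -x 2] = 0 := by
  ext i
  fin_cases i <;> simp [jacobianH, mulVec, dotProduct, Fin.sum_univ_four] <;> ring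

theorem map_jacobianH {S : Type*} [CommRing S] (f : R →+* S) (c : R) (x : Fin 4 → R) :
    (jacobianH c x).map f = jacobianH (f c) (f ∘ x) := by
  ext i j
  fin_cases i <;> fin_cases j <;> simp [jacobianH]

end

theorem pderiv_eq_jacobianH {K : Type*} [Field K] (h2 : ringChar K ≠ 2) (c : K) :
    let H : Fin 4 → MvPolynomial (Fin 4) K :=
      ![X 0 * X 2 + C c * (X 1 * X 3),
        X 1 * X 2 - X 0 * X 3,
        C (2⁻¹ : K) * X 2 ^ 2 + C (c / 2) * X 3 ^ 2,
        C (2⁻¹ : K) * X 0 ^ 2 + C (c / 2) * X 1 ^ 2]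
    Matrix.of (fun i j => pderiv j (H i)) = jacobianH (C c) X := by
  intro H
  have h2' : (2 : K) ≠ 0 := Ring.two_ne_zero h2
  have hC2 : (2 : MvPolynomial (Fin 4) K) = C 2 := rfl
  refine Matrix.ext fun i j => ?_
  fin_cases i <;> fin_cases j <;>
    simp [H, jacobianH, pderiv_X, hC2, ← mul_assoc, ← C_mul, h2']
  ring

theorem det_zero_rank_le_three_general {K : Type*} [Field K] (h2 : ringChar K ≠ 2)
    (c : K) :
    let H : Fin 4 → MvPolynomial (Fin 4) K :=
      ![X 0 * X 2 + C c * (X 1 * X 3),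
        X 1 * X 2 - X 0 * X 3,
        C (2⁻¹ : K) * X 2 ^ 2 + C (c / 2) * X 3 ^ 2,
        C (2⁻¹ : K) * X 0 ^ 2 + C (c / 2) * X 1 ^ 2]
    let M : Matrix (Fin 4) (Fin 4) (MvPolynomial (Fin 4) K) :=
      Matrix.of fun i j => pderiv j (H i)
    M.det = 0 ∧
      (M.map (algebraMap (MvPolynomial (Fin 4) K)
        (FractionRing (MvPolynomial (Fin 4) K)))).rank ≤ 3 := by
  intro H M
  set f := algebraMap (MvPolynomial (Fin 4) K) (FractionRing (MvPolynomial (Fin 4) K))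
  have hM : M = jacobianH (C c) X := pderiv_eq_jacobianH h2 c
  have hX : (X 0 : MvPolynomial (Fin 4) K) ≠ 0 := X_ne_zero 0
  have hfX : f (X 0) ≠ 0 := (map_ne_zero_iff f (IsFractionRing.injective _ _)).mpr hX
  refine ⟨?_, ?_⟩
  · rw [hM, ← exists_mulVec_eq_zero_iff]
    exact ⟨_, fun h => hX (by simpa using congrFun h 1), jacobianH_mulVec _ _⟩
  · rw [hM, map_jacobianH]
    exact Nat.le_of_lt_succ <| Matrix.rank_lt_card_of_mulVec_eq_zero _
      (fun h => hfX (by simpa using congrFun h 1)) (jacobianH_mulVec _ _)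

theorem det_zero_rank_le_three {K : Type*} [Field K] (h2 : ringChar K ≠ 2)
    (c : K) (hc : c ≠ 0) :
    let H : Fin 4 → MvPolynomial (Fin 4) K :=
      ![X 0 * X 2 + C c * (X 1 * X 3),
        X 1 * X 2 - X 0 * X 3,
        C (2⁻¹ : K) * X 2 ^ 2 + C (c / 2) * X 3 ^ 2,
        C (2⁻¹ : K) * X 0 ^ 2 + C (c / 2) * X 1 ^ 2]
    let M : Matrix (Fin 4) (Fin 4) (MvPolynomial (Fin 4) K) :=
      Matrix.of fun i j => pderiv j (H i)
    M.det = 0 ∧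
      (M.map (algebraMap (MvPolynomial (Fin 4) K)
        (FractionRing (MvPolynomial (Fin 4) K)))).rank ≤ 3 :=
  det_zero_rank_le_three_general h2 c
end

section
/- Let R be an integral domain of characteristic zero with fraction field K, and let F, F̃ ∈ R[x₁,…,xₙ]ⁿ be polynomial maps such that F is invertible over R (i.e. has a polynomial inverse with coefficients in R), F̃ᵢ = Fᵢ for all i ≠ n, and det J F̃ = det J F. Then F̃ₙ − Fₙ ∈ R[F₁,…,F_{n−1}], so F̃ ∘ F⁻¹ is an elementary polynomial map over R; in particular F̃ is invertible over R. -/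
/-!
Write `F̃ = H ∘ F` with `H = (x₁, …, xₙ₋₁, xₙ + E)` and `E = (F̃ₙ - Fₙ) ∘ F⁻¹`. By the chain rule
`det J F̃ = (det J H ∘ F) · det J F`, and `det J F` is a unit since `F` is invertible, so
`det J H = 1 + ∂ₙE` equals `1`. In characteristic zero `∂ₙE = 0` means that `E` does not involve
`xₙ`; hence `F̃ₙ - Fₙ = E ∘ F ∈ R[F₁, …, Fₙ₋₁]`, and `H` is inverted by `xₙ ↦ xₙ - E`, so that
`F̃⁻¹ = F⁻¹ ∘ H⁻¹`.
-/

open MvPolynomial Matrix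

theorem Matrix.det_one_updateRow {n R : Type*} [Fintype n] [DecidableEq n] [CommRing R]
    (i : n) (v : n → R) : ((1 : Matrix n n R).updateRow i v).det = v i := by
  have hv : ∑ k, v k • (1 : Matrix n n R) k = v := by
    ext j
    simp [one_apply]
  simpa [hv] using det_updateRow_sum (1 : Matrix n n R) i v

namespace MvPolynomial

section CommSemiring

variable {R σ τ ι : Type*} [CommSemiring R]

theorem pderiv_eq_zero_iff_notMem_vars [NoZeroDivisors R] [CharZero R] {i : σ}
    {p : MvPolynomial σ R} : pderiv i p = 0 ↔ i ∉ p.vars := by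
  refine ⟨fun h hi => ?_, pderiv_eq_zero_of_notMem_vars⟩
  obtain ⟨m, hm, hmi⟩ := (mem_vars_iff_mem_support i).mp hi
  have hcoeff := coeff_pderiv (i := i) p (m - Finsupp.single i 1)
  rw [h, coeff_zero, tsub_add_cancel_of_le (Finsupp.single_le_iff.mpr
    (Nat.one_le_iff_ne_zero.mpr (Finsupp.mem_support_iff.mp hmi)))] at hcoeff
  exact Finsupp.mem_support_iff.mp hm
    ((mul_eq_zero.mp hcoeff.symm).resolve_right (Nat.cast_add_one_ne_zero _))

theorem pderiv_bind₁ [Fintype σ] (F : σ → MvPolynomial τ R) (j : τ) (p : MvPolynomial σ R) :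
    pderiv j (bind₁ F p) = ∑ i, bind₁ F (pderiv i p) * pderiv j (F i) := by
  classical
  induction p using MvPolynomial.induction_on with
  | C a => simp
  | add p q hp hq => simp only [map_add, hp, hq, add_mul, Finset.sum_add_distrib]
  | mul_X p k hp =>
    simp [Derivation.leibniz, pderiv_X, hp, add_mul, Finset.sum_add_distrib, Finset.mul_sum,
      Pi.single_apply, mul_assoc, apply_ite (bind₁ F), ite_mul]

theorem bind₁_leftInverse_of_bind₁_eq_X {F : σ → MvPolynomial τ R} {G : τ → MvPolynomial σ R}
    (h : ∀ i, bind₁ G (F i) = X i) : Function.LeftInverse (bind₁ G) (bind₁ F) := fun p => by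
  simp [bind₁_bind₁, h]

/-- Reading `bind₁ F p` as `p ∘ F`: a left inverse of `H ∘ F` is `F⁻¹ ∘ H⁻¹`. -/
theorem bind₁_bind₁_eq_X_of_bind₁_eq_X {F : σ → MvPolynomial τ R} {G : τ → MvPolynomial σ R}
    {H : ι → MvPolynomial σ R} {K : σ → MvPolynomial ι R}
    (hGF : ∀ k, bind₁ G (F k) = X k) (hKH : ∀ i, bind₁ K (H i) = X i) (i : ι) :
    bind₁ (fun k => bind₁ K (G k)) (bind₁ F (H i)) = X i := by
  rw [← bind₁_bind₁, bind₁_leftInverse_of_bind₁_eq_X hGF, hKH]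

end CommSemiring

section CommRing

variable {R σ τ ι : Type*} [CommRing R]

theorem bind₁_update_X_of_notMem_vars [DecidableEq σ] {i : σ} {p : MvPolynomial σ R}
    (hp : i ∉ p.vars) (q : MvPolynomial σ R) : bind₁ (Function.update X i q) p = p :=
  hom_congr_vars (f₁ := (bind₁ (Function.update X i q)).toRingHom) (f₂ := RingHom.id _)
    (by ext; simp) (fun _ hj _ => by simp [Function.update_of_ne (ne_of_mem_of_not_mem hj hp)]) rfl

theorem bind₁_update_X_sub_update_X_add [DecidableEq σ] {i : σ} {p : MvPolynomial σ R}
    (hp : i ∉ p.vars) (j : σ) :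
    bind₁ (Function.update X i (X i - p)) (Function.update X i (X i + p) j) = X j := by
  rcases eq_or_ne j i with rfl | hj
  · simp [bind₁_update_X_of_notMem_vars hp]
  · simp [hj]

theorem bind₁_update_X_add_update_X_sub [DecidableEq σ] {i : σ} {p : MvPolynomial σ R}
    (hp : i ∉ p.vars) (j : σ) :
    bind₁ (Function.update X i (X i + p)) (Function.update X i (X i - p) j) = X j := by
  rcases eq_or_ne j i with rfl | hj
  · simp [bind₁_update_X_of_notMem_vars hp]
  · simp [hj]

noncomputable def jacobian (F : ι → MvPolynomial σ R) : Matrix ι σ (MvPolynomial σ R) :=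
  Matrix.of fun i j => pderiv j (F i)

theorem jacobian_bind₁ [Fintype σ] (F : σ → MvPolynomial τ R) (H : ι → MvPolynomial σ R) :
    jacobian (fun i => bind₁ F (H i)) = (jacobian H).map (bind₁ F) * jacobian F := by
  ext i j
  simp [jacobian, mul_apply, pderiv_bind₁]

theorem jacobian_X [DecidableEq σ] : jacobian (X : σ → MvPolynomial σ R) = 1 := by
  ext i j
  simp [jacobian, pderiv_X, one_apply, Pi.single_apply]

theorem jacobian_update_X [DecidableEq σ] (i : σ) (q : MvPolynomial σ R) :
    jacobian (Function.update X i q) = (1 : Matrix σ σ _).updateRow i fun j => pderiv j q := by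
  ext k j
  rcases eq_or_ne k i with rfl | hk
  · simp [jacobian]
  · simp [jacobian, hk, pderiv_X, one_apply, Pi.single_apply]

theorem det_jacobian_update_X [Fintype σ] [DecidableEq σ] (i : σ) (q : MvPolynomial σ R) :
    (jacobian (Function.update X i q)).det = pderiv i q := by
  rw [jacobian_update_X, det_one_updateRow]

theorem isUnit_det_jacobian_of_bind₁_eq_X [Fintype σ] [DecidableEq σ]
    {F G : σ → MvPolynomial σ R} (h : ∀ i, bind₁ F (G i) = X i) : IsUnit (jacobian F).det := by
  have hJ := congrArg det (jacobian_bind₁ F G)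
  rw [_root_.funext h, jacobian_X, det_one, det_mul] at hJ
  exact .of_mul_eq_one_right _ hJ.symm

theorem det_jacobian_eq_one_of_det_jacobian_bind₁_eq [Fintype σ] [DecidableEq σ]
    {F G H : σ → MvPolynomial σ R} (hGF : ∀ i, bind₁ G (F i) = X i)
    (hFG : ∀ i, bind₁ F (G i) = X i)
    (h : (jacobian fun i => bind₁ F (H i)).det = (jacobian F).det) : (jacobian H).det = 1 := by
  rw [jacobian_bind₁, det_mul, ← AlgHom.mapMatrix_apply, ← AlgHom.map_det] at h
  apply (bind₁_leftInverse_of_bind₁_eq_X hGF).injective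
  rw [(isUnit_det_jacobian_of_bind₁_eq_X hFG).mul_eq_right.mp h, map_one]

end CommRing

end MvPolynomial

theorem elementary_of_equal_jacobian_det {R : Type*} [CommRing R] [IsDomain R] [CharZero R]
    {n : ℕ} (F Ft G : Fin (n + 1) → MvPolynomial (Fin (n + 1)) R)
    (hFG : ∀ i, bind₁ G (F i) = X i) (hGF : ∀ i, bind₁ F (G i) = X i)
    (heq : ∀ i, i ≠ Fin.last n → Ft i = F i)
    (hdet : (Matrix.of fun i j => pderiv j (Ft i)).det
      = (Matrix.of fun i j => pderiv j (F i)).det) :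
    (Ft (Fin.last n) - F (Fin.last n))
        ∈ Algebra.adjoin R (Set.range fun i : Fin n => F i.castSucc) ∧
      ∃ Gt : Fin (n + 1) → MvPolynomial (Fin (n + 1)) R,
        (∀ i, bind₁ Gt (Ft i) = X i) ∧ (∀ i, bind₁ Ft (Gt i) = X i) := by
  set E := bind₁ G (Ft (Fin.last n) - F (Fin.last n))
  have hFE : bind₁ F E = Ft (Fin.last n) - F (Fin.last n) :=
    bind₁_leftInverse_of_bind₁_eq_X hGF _
  set H := Function.update X (Fin.last n) (X (Fin.last n) + E)
  have hFt : Ft = fun i => bind₁ F (H i) := by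
    funext i
    rcases eq_or_ne i (Fin.last n) with rfl | hi
    · simp [H, hFE]
    · simp [H, hi, heq i hi]
  have hJH : (jacobian H).det = 1 :=
    det_jacobian_eq_one_of_det_jacobian_bind₁_eq hFG hGF (hFt ▸ hdet)
  have hE : Fin.last n ∉ E.vars := by
    rw [← pderiv_eq_zero_iff_notMem_vars]
    simpa [H, det_jacobian_update_X] using hJH
  refine ⟨?_, fun k => bind₁ (Function.update X (Fin.last n) (X (Fin.last n) - E)) (G k),
    hFt ▸ bind₁_bind₁_eq_X_of_bind₁_eq_X hFG (bind₁_update_X_sub_update_X_add hE),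
    hFt ▸ bind₁_bind₁_eq_X_of_bind₁_eq_X (bind₁_update_X_add_update_X_sub hE) hGF⟩
  obtain ⟨E', hE'⟩ := exists_rename_eq_of_vars_subset_range E Fin.castSucc
    (Fin.castSucc_injective n) fun i hi => Fin.exists_castSucc_eq.mpr (ne_of_mem_of_not_mem hi hE)
  rw [← hFE, ← hE', bind₁_rename, Algebra.adjoin_range_eq_range_aeval]
  exact ⟨E', rfl⟩
end

section
/- Let K be a field, H ∈ K[x₁,…,xₙ]^m quadratic homogeneous, and suppose M := J H is written (after composing with invertible linear maps) in block form M = [[A, B],[C, D]] with A of size r×r, where r = rk M equals the rank of M over K(x) and the leading principal r×r minor of the coefficient matrix of a linear form L₁ (in the decomposition M = ∑ᵢ M^{(i)} Lᵢ, with M^{(1)} = [[I_r,0],[0,0]]) is the identity. If every (r+1)×(r+1) minor of M vanishes, then D = 0 and C·B = 0. -/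
/-!
Specialise along the `K`-algebra map `ψ : K[x] → K[x][T]` with `ψ L₁ = 1 + T • L₁` and
`ψ Lₜ = T • Lₜ` for `t ≠ 1`; it exists because the `Lₜ` form a basis of the linear forms.
It sends `M` to `M⁽¹⁾ + T • M`, so the minor bordering `A` by a row `(c, d)` and a column `(b, d)`
of `M` becomes `det [[1 + T • A, T • b], [T • c, T • d]] = 0`. Cancel `T` from the last row and
reduce modulo `T²`: there `1 + T • A` is invertible with inverse `1 - T • A`, and the Schur
complement `d - T • (c * b)` must vanish, i.e. `d = 0` and `c * b = 0`.
-/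

namespace MvPolynomial

theorem IsHomogeneous.exists_eq_sum_smul_X {R σ : Type*} [CommSemiring R] [Fintype σ]
    {p : MvPolynomial σ R} (hp : p.IsHomogeneous 1) : ∃ a : σ → R, p = ∑ s, a s • X s := by
  have hmem : p ∈ homogeneousSubmodule σ R 1 := hp
  rw [homogeneousSubmodule_one_eq_span_X, Submodule.mem_span_range_iff_exists_fun] at hmem
  obtain ⟨a, ha⟩ := hmem
  exact ⟨a, ha.symm⟩

theorem exists_algHom_apply_eq_of_linearIndependent {K σ S : Type*} [Field K] [Fintype σ]
    [CommSemiring S] [Algebra K S] {L : σ → MvPolynomial σ K}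
    (hL : ∀ t, (L t).IsHomogeneous 1) (hind : LinearIndependent K L) (v : σ → S) :
    ∃ ψ : MvPolynomial σ K →ₐ[K] S, ∀ t, ψ (L t) = v t := by
  classical
  choose c hc using fun t => (hL t).exists_eq_sum_smul_X
  have hL_eq : L = Fintype.linearCombination K X ∘ c := by
    ext1 t
    simp [hc t, Fintype.linearCombination_apply]
  have hc_unit : IsUnit (Matrix.of c) :=
    Matrix.linearIndependent_rows_iff_isUnit.1 (hL_eq ▸ hind).of_comp
  have hinv := Matrix.mul_nonsing_inv _ ((Matrix.isUnit_iff_isUnit_det _).1 hc_unit)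
  refine ⟨aeval fun s => ∑ u, (Matrix.of c)⁻¹ s u • v u, fun t => ?_⟩
  calc aeval (fun s => ∑ u, (Matrix.of c)⁻¹ s u • v u) (L t)
      = ∑ u, (Matrix.of c * (Matrix.of c)⁻¹) t u • v u := by
        simp only [hc t, map_sum, map_smul, aeval_X, Finset.smul_sum, smul_smul,
          Matrix.mul_apply, Finset.sum_smul]
        exact Finset.sum_comm
    _ = v t := by simp [hinv, Matrix.one_apply]

end MvPolynomial

namespace Matrix

theorem det_submatrix_eq_zero_of_card_eq {R m n κ : Type*} [CommRing R] [Fintype κ]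
    [DecidableEq κ] {M : Matrix m n R} {k : ℕ}
    (hM : ∀ (ri : Fin k → m) (ci : Fin k → n), (M.submatrix ri ci).det = 0)
    (hκ : Fintype.card κ = k) (e : κ → m) (f : κ → n) : (M.submatrix e f).det = 0 := by
  rw [← det_submatrix_equiv_self (Fintype.equivFinOfCardEq hκ).symm, submatrix_submatrix]
  exact hM _ _

variable {R m n : Type*} [CommRing R] [Fintype m] [DecidableEq m] [Fintype n] [DecidableEq n]

theorem det_fromBlocks_smul_bottom (s : R) (A : Matrix m m R) (B : Matrix m n R)
    (C : Matrix n m R) (D : Matrix n n R) :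
    (fromBlocks A B (s • C) (s • D)).det = s ^ Fintype.card n * (fromBlocks A B C D).det := by
  have : fromBlocks A B (s • C) (s • D) = fromBlocks 1 0 0 (s • 1) * fromBlocks A B C D := by
    simp [fromBlocks_multiply]
  rw [this, det_mul, det_fromBlocks_zero₂₁, det_one, det_smul, det_one, one_mul, mul_one]

theorem det_fromBlocks_one_add_smul_eq_zero_iff {x : R} (hx : x * x = 0) (A : Matrix m m R)
    (B : Matrix m n R) (C : Matrix n m R) (D : Matrix n n R) :
    (fromBlocks (1 + x • A) (x • B) C D).det = 0 ↔ (D - x • (C * B)).det = 0 := by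
  have hinv : (1 - x • A) * (1 + x • A) = 1 := by
    simp [Matrix.sub_mul, Matrix.mul_add, smul_sub, smul_smul, hx]
  let := invertibleOfLeftInverse _ _ hinv
  have hschur : C * ⅟(1 + x • A) * (x • B) = x • (C * B) := by
    show C * (1 - x • A) * (x • B) = x • (C * B)
    simp [Matrix.mul_sub, Matrix.sub_mul, smul_sub, smul_smul, hx, Matrix.mul_assoc]
  rw [det_fromBlocks₁₁, hschur, (isUnit_det_of_invertible _).mul_right_eq_zero]

open Polynomial DualNumber in
theorem corner_eq_zero_and_sum_mul_eq_zero_of_det_X_smul_add_fromBlocks_one {o : Type*}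
    [Fintype o] [DecidableEq o] (N : Matrix (o ⊕ Unit) (o ⊕ Unit) R)
    (h : ((X : R[X]) • N.map C + fromBlocks 1 0 0 0).det = 0) :
    N (.inr ()) (.inr ()) = 0 ∧ ∑ k, N (.inr ()) (.inl k) * N (.inl k) (.inr ()) = 0 := by
  rw [← fromBlocks_toBlocks N] at h ⊢
  set A := N.toBlocks₁₁
  set b := N.toBlocks₁₂
  set c := N.toBlocks₂₁
  set d := N.toBlocks₂₂
  have hX : (fromBlocks (1 + (X : R[X]) • A.map C) ((X : R[X]) • b.map C) (c.map C)
      (d.map C)).det = 0 := by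
    rw [fromBlocks_map, fromBlocks_smul, fromBlocks_add] at h
    simp only [add_zero, add_comm _ (1 : Matrix o o R[X])] at h
    rw [det_fromBlocks_smul_bottom, Fintype.card_unit, pow_one] at h
    exact isRegular_X.left (h.trans (mul_zero _).symm)
  have hε : (fromBlocks (1 + (eps : DualNumber R) • A.map (algebraMap R (DualNumber R)))
      ((eps : DualNumber R) • b.map (algebraMap R (DualNumber R)))
      (c.map (algebraMap R (DualNumber R))) (d.map (algebraMap R (DualNumber R)))).det = 0 := by
    have := congrArg (aeval (eps : DualNumber R) : R[X] →ₐ[R] DualNumber R) hX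
    rw [map_zero, AlgHom.map_det] at this
    convert this using 2
    ext (i | i) (j | j) <;> simp [one_apply]
  rw [det_fromBlocks_one_add_smul_eq_zero_iff eps_mul_eps, det_unique] at hε
  simp only [Matrix.sub_apply, Matrix.smul_apply, mul_apply, map_apply, smul_eq_mul] at hε
  have hfst := congrArg TrivSqZeroExt.fst hε
  have hsnd := congrArg TrivSqZeroExt.snd hε
  simp [TrivSqZeroExt.algebraMap_eq_inl, TrivSqZeroExt.fst_sum] at hfst hsnd
  exact ⟨hfst, hsnd⟩

end Matrix

open MvPolynomial Matrix
open scoped Polynomial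

theorem block_D_zero_CB_zero_general {K : Type*} [Field K] {m n r : ℕ}
    (hn : 0 < n) (hrm : r ≤ m) (hrn : r ≤ n)
    (M : Matrix (Fin m) (Fin n) (MvPolynomial (Fin n) K))
    (Lf : Fin n → MvPolynomial (Fin n) K) (hL1 : ∀ t, (Lf t).IsHomogeneous 1)
    (hLind : LinearIndependent K Lf)
    (Mc : Fin n → Matrix (Fin m) (Fin n) K)
    (hdecomp : ∀ i j, M i j = ∑ t, C (Mc t i j) * Lf t)
    (hM1 : ∀ (i : Fin m) (j : Fin n),
      Mc ⟨0, hn⟩ i j = if (i : ℕ) = (j : ℕ) ∧ (i : ℕ) < r then 1 else 0)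
    (hminor : ∀ (ri : Fin (r + 1) → Fin m) (ci : Fin (r + 1) → Fin n),
      (M.submatrix ri ci).det = 0) :
    (∀ (i : Fin m) (j : Fin n), r ≤ (i : ℕ) → r ≤ (j : ℕ) → M i j = 0) ∧
    (∀ (i : Fin m) (j : Fin n), r ≤ (i : ℕ) → r ≤ (j : ℕ) →
      ∑ k : Fin r, M i (Fin.castLE hrn k) * M (Fin.castLE hrm k) j = 0) := by
  set z : Fin n := ⟨0, hn⟩
  let T : (MvPolynomial (Fin n) K)[X] := Polynomial.X
  obtain ⟨ψ, hψ⟩ := exists_algHom_apply_eq_of_linearIndependent hL1 hLind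
    fun t => T * Polynomial.C (Lf t) + if t = z then 1 else 0
  have hψM : ∀ i j, ψ (M i j) = T * Polynomial.C (M i j) + algebraMap K _ (Mc z i j) := by
    intro i j
    simp only [hdecomp, map_sum, map_mul, algHom_C, hψ, mul_add, Finset.sum_add_distrib, mul_ite,
      mul_one, mul_zero, Finset.sum_ite_eq', Finset.mem_univ, if_true, Finset.mul_sum]
    rw [add_left_inj]
    refine Finset.sum_congr rfl fun t _ => ?_
    rw [Polynomial.algebraMap_apply, MvPolynomial.algebraMap_eq]
    ring
  simp only [← forall_and]
  intro i j hi hj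
  let e : Fin r ⊕ Unit → Fin m := Sum.elim (Fin.castLE hrm) fun _ => i
  let f : Fin r ⊕ Unit → Fin n := Sum.elim (Fin.castLE hrn) fun _ => j
  have hMc : ((Mc z).submatrix e f).map (algebraMap K (MvPolynomial (Fin n) K)[X]) =
      fromBlocks 1 0 0 0 := by
    ext (a | a) (b | b) : 1 <;> simp [e, f, hM1, one_apply, Fin.ext_iff] <;> omega
  have hψN : ψ.mapMatrix (M.submatrix e f) = T • (M.submatrix e f).map Polynomial.C
      + fromBlocks 1 0 0 0 := by
    ext a b : 1
    rw [← hMc]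
    simp only [AlgHom.mapMatrix_apply, map_apply, submatrix_apply, hψM, Matrix.add_apply,
      Matrix.smul_apply, smul_eq_mul]
  have hdet := congrArg ψ (det_submatrix_eq_zero_of_card_eq hminor (by simp) e f)
  rw [AlgHom.map_det, map_zero, hψN] at hdet
  exact corner_eq_zero_and_sum_mul_eq_zero_of_det_X_smul_add_fromBlocks_one _ hdet

theorem block_D_zero_CB_zero {K : Type*} [Field K] {m n r : ℕ}
    (hn : 0 < n) (hrm : r ≤ m) (hrn : r ≤ n)
    (H : Fin m → MvPolynomial (Fin n) K) (hH : ∀ i, (H i).IsHomogeneous 2)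
    (M : Matrix (Fin m) (Fin n) (MvPolynomial (Fin n) K))
    (hM : M = Matrix.of fun i j => pderiv j (H i))
    (Lf : Fin n → MvPolynomial (Fin n) K) (hL1 : ∀ t, (Lf t).IsHomogeneous 1)
    (hLind : LinearIndependent K Lf)
    (Mc : Fin n → Matrix (Fin m) (Fin n) K)
    (hdecomp : ∀ i j, M i j = ∑ t, C (Mc t i j) * Lf t)
    (hM1 : ∀ (i : Fin m) (j : Fin n),
      Mc ⟨0, hn⟩ i j = if (i : ℕ) = (j : ℕ) ∧ (i : ℕ) < r then 1 else 0)
    (hrank : (M.map (algebraMap (MvPolynomial (Fin n) K)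
      (FractionRing (MvPolynomial (Fin n) K)))).rank = r)
    (hminor : ∀ (ri : Fin (r + 1) → Fin m) (ci : Fin (r + 1) → Fin n),
      (M.submatrix ri ci).det = 0) :
    (∀ (i : Fin m) (j : Fin n), r ≤ (i : ℕ) → r ≤ (j : ℕ) → M i j = 0) ∧
    (∀ (i : Fin m) (j : Fin n), r ≤ (i : ℕ) → r ≤ (j : ℕ) →
      ∑ k : Fin r, M i (Fin.castLE hrn k) * M (Fin.castLE hrm k) j = 0) :=
  block_D_zero_CB_zero_general hn hrm hrn M Lf hL1 hLind Mc hdecomp hM1 hminor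
end

section
/- Let M be a nonzero m×n matrix whose entries are linear forms in K[x₁,…,xₙ], and suppose r := rk M (rank over K(x)) does not exceed the cardinality of K. Then there exist invertible matrices S ∈ GL_m(K) and T ∈ GL_n(K) such that S M T = ∑ᵢ M̃^{(i)} Lᵢ, where each M̃^{(i)} is a constant matrix over K, L₁,…,Lₙ are linearly independent linear forms, and M̃^{(1)} is the block matrix with I_r in the upper-left corner and zeros elsewhere. -/
open MvPolynomial Matrix Module Cardinal

/-!
Pick an `r × r` minor of `M` that is nonzero over the fraction field. Its determinant is a nonzero
form of degree `r ≤ #K`, hence does not vanish at some point `v ∈ Kⁿ`, and then `M(v)` has rank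
exactly `r`; invertible `S`, `T` bring `M(v)` to `diag(I_r, 0)`. Finally, for a basis `b` of `Kⁿ`
with `b₀ = v` and its coordinate forms `Lₜ`, every linear form `ℓ` equals `∑ₜ ℓ(bₜ) Lₜ`; applied to
the entries of `S M T` this gives the decomposition, whose coefficient matrix at `t = 0` is
`S M(v) T`.
-/

theorem exists_linearIndependent_comp_of_le_finrank_span {K V ι : Type*} [DivisionRing K]
    [AddCommGroup V] [Module K V] [Finite ι] (v : ι → V) {s : ℕ}
    (hs : s ≤ finrank K (Submodule.span K (Set.range v))) :
    ∃ g : Fin s → ι, LinearIndependent K (v ∘ g) := by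
  obtain ⟨κ, a, ha, hspan, hli⟩ := exists_linearIndependent' K v
  have : Finite κ := Finite.of_injective a ha
  have : Fintype κ := Fintype.ofFinite κ
  rw [← hspan, finrank_span_eq_card hli] at hs
  let e : Fin s ↪ κ := (Fin.castLEEmb hs).trans (Fintype.equivFin κ).symm.toEmbedding
  exact ⟨a ∘ e, hli.comp e e.injective⟩

theorem Module.Basis.sumExtend_inl {K V ι : Type*} [DivisionRing K] [AddCommGroup V]
    [Module K V] {w : ι → V} (hw : LinearIndependent K w) (i : ι) :
    Basis.sumExtend hw (Sum.inl i) = w i := by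
  simp only [sumExtend, Equiv.Set.sumDiffSubset, Equiv.trans_def, coe_reindex, coe_extend,
    Function.comp_apply]
  rfl

theorem Module.Basis.exists_comp_inl_eq {K V : Type*} [DivisionRing K] [AddCommGroup V]
    [Module K V] [Module.Finite K V] {a c : ℕ} (hV : finrank K V = a + c) {w : Fin a → V}
    (hw : LinearIndependent K w) : ∃ b : Basis (Fin a ⊕ Fin c) K V, b ∘ Sum.inl = w := by
  let b := Basis.sumExtend hw
  have : Finite (Fin a ⊕ sumExtendIndex hw) := Module.Finite.finite_basis b
  have : Finite (sumExtendIndex hw) :=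
    _root_.Finite.of_injective (β := Fin a ⊕ _) _ Sum.inr_injective
  have hcard : Nat.card (sumExtendIndex hw) = c := by
    have := finrank_eq_nat_card_basis b
    rw [Nat.card_sum, Nat.card_eq_fintype_card, Fintype.card_fin] at this
    omega
  refine ⟨b.reindex ((Equiv.refl _).sumCongr (Finite.equivFinOfCardEq hcard)), ?_⟩
  ext i
  simp [b, Basis.sumExtend_inl]

theorem Module.Basis.exists_apply_eq {K V : Type*} [DivisionRing K] [AddCommGroup V]
    [Module K V] [Module.Finite K V] {n : ℕ} (hV : finrank K V = n) {v : V} (hv : v ≠ 0)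
    (i : Fin n) : ∃ b : Basis (Fin n) K V, b i = v := by
  have hn : 1 + (n - 1) = n := by have := i.pos; omega
  obtain ⟨b, hb⟩ := exists_comp_inl_eq (hV.trans hn.symm)
    (linearIndependent_unique_iff.mpr hv : LinearIndependent K fun _ : Fin 1 => v)
  let e₀ := finSumFinEquiv.trans (finCongr hn)
  refine ⟨b.reindex (e₀.trans (Equiv.swap (e₀ (Sum.inl 0)) i)), ?_⟩
  simpa using congrFun hb 0

theorem Module.Basis.isUnit_toMatrix {R M ι : Type*} [CommRing R] [AddCommGroup M] [Module R M]
    [Fintype ι] [DecidableEq ι] (b b' : Basis ι R M) : IsUnit (b.toMatrix b') :=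
  letI := b.invertibleToMatrix b'
  isUnit_of_invertible _

theorem LinearMap.exists_basis_toMatrix_eq_fromBlocks {K V W : Type*} [Field K] [AddCommGroup V]
    [Module K V] [AddCommGroup W] [Module K W] [FiniteDimensional K V] [FiniteDimensional K W]
    (f : V →ₗ[K] W) {r k l : ℕ} (hr : finrank K (range f) = r) (hV : finrank K V = r + k)
    (hW : finrank K W = r + l) :
    ∃ (b : Basis (Fin r ⊕ Fin k) K V) (c : Basis (Fin r ⊕ Fin l) K W),
      toMatrix b c f = fromBlocks 1 0 0 0 := by
  have hk : finrank K (ker f) = k := by have := f.finrank_range_add_finrank_ker; omega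
  let z : Fin k → V := (ker f).subtype ∘ finBasisOfFinrankEq K (ker f) hk
  have hz : LinearIndependent K z :=
    (finBasisOfFinrankEq K (ker f) hk).linearIndependent.map' _ (ker f).ker_subtype
  have hzspan : Submodule.span K (Set.range z) = ker f := by
    rw [Set.range_comp, ← Submodule.map_span, Basis.span_eq, Submodule.map_top,
      Submodule.range_subtype]
  obtain ⟨b, hb⟩ := Basis.exists_comp_inl_eq (hV.trans (add_comm r k)) hz
  have hfx : LinearIndependent K (f ∘ b ∘ Sum.inr) := by
    refine (b.linearIndependent.comp _ Sum.inr_injective).map ?_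
    rw [← hzspan, ← hb]
    exact (linearIndependent_sum.mp b.linearIndependent).2.2.symm
  obtain ⟨c, hc⟩ := Basis.exists_comp_inl_eq hW hfx
  refine ⟨b.reindex (Equiv.sumComm _ _), c, ?_⟩
  have hker : ∀ j, f (b (Sum.inl j)) = 0 := fun j => by
    rw [← LinearMap.mem_ker, ← hzspan, show b (Sum.inl j) = z j from congrFun hb j]
    exact Submodule.subset_span ⟨j, rfl⟩
  have himage : ∀ j, f (b (Sum.inr j)) = c (Sum.inl j) := fun j => (congrFun hc j).symm
  ext (i | i) (j | j) <;>
    simp [toMatrix_apply, hker, himage, Finsupp.single_apply, one_apply, eq_comm]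

theorem Matrix.exists_isUnit_mul_mul_eq_ite {K : Type*} [Field K] {m n : ℕ}
    (A : Matrix (Fin m) (Fin n) K) :
    ∃ (S : Matrix (Fin m) (Fin m) K) (T : Matrix (Fin n) (Fin n) K), IsUnit S ∧ IsUnit T ∧
      ∀ i j, (S * A * T) i j = if (i : ℕ) = j ∧ (i : ℕ) < A.rank then 1 else 0 := by
  have hn : A.rank + (n - A.rank) = n := Nat.add_sub_of_le A.rank_le_width
  have hm : A.rank + (m - A.rank) = m := Nat.add_sub_of_le A.rank_le_height
  obtain ⟨b, c, hbc⟩ := A.mulVecLin.exists_basis_toMatrix_eq_fromBlocks (r := A.rank) rfl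
    ((finrank_fin_fun K).trans hn.symm) ((finrank_fin_fun K).trans hm.symm)
  let eN := finSumFinEquiv.trans (finCongr hn)
  let eM := finSumFinEquiv.trans (finCongr hm)
  refine ⟨(c.reindex eM).toMatrix (Pi.basisFun K _), (Pi.basisFun K _).toMatrix (b.reindex eN),
    Basis.isUnit_toMatrix _ _, Basis.isUnit_toMatrix _ _, fun i j => ?_⟩
  have hA : LinearMap.toMatrix (Pi.basisFun K _) (Pi.basisFun K _) A.mulVecLin = A := by
    ext
    simp [LinearMap.toMatrix_apply, mulVec_single]
  have hchange := basis_toMatrix_mul_linearMap_toMatrix_mul_basis_toMatrix (b.reindex eN)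
    (Pi.basisFun K _) (c.reindex eM) (Pi.basisFun K _) A.mulVecLin
  rw [hA] at hchange
  rw [hchange]
  obtain ⟨i, rfl⟩ := eM.surjective i
  obtain ⟨j, rfl⟩ := eN.surjective j
  have hreindex : LinearMap.toMatrix (b.reindex eN) (c.reindex eM) A.mulVecLin (eM i) (eN j) =
      LinearMap.toMatrix b c A.mulVecLin i j := by
    simp [LinearMap.toMatrix_apply]
  rw [hreindex, hbc]
  rcases i with i | i <;> rcases j with j | j <;> simp [eM, eN, one_apply, Fin.ext_iff]
  omega

namespace Matrix

variable {m n : Type*}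

theorem mul_mul_apply_eq_sum {R l o : Type*} [CommSemiring R] [Fintype m] [Fintype n]
    (S : Matrix l m R) (A : Matrix m n R) (T : Matrix n o R) (i : l) (j : o) :
    (S * A * T) i j = ∑ k₁, ∑ k₂, S i k₁ * A k₁ k₂ * T k₂ j := by
  simp_rw [mul_apply, Finset.sum_mul]
  exact Finset.sum_comm

theorem le_rank_of_det_submatrix_ne_zero {R : Type*} [CommRing R] [IsDomain R] [Fintype n]
    (A : Matrix m n R) {s : ℕ} {f : Fin s → m} {g : Fin s → n}
    (h : (A.submatrix f g).det ≠ 0) : s ≤ A.rank := by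
  simpa [rank_of_det_ne_zero h] using rank_submatrix_le A f g

theorem exists_det_submatrix_ne_zero_of_le_rank {K : Type*} [Field K] [Fintype m] [Fintype n]
    (A : Matrix m n K) {s : ℕ} (hs : s ≤ A.rank) :
    ∃ (f : Fin s → m) (g : Fin s → n), (A.submatrix f g).det ≠ 0 := by
  obtain ⟨g, hg⟩ :=
    exists_linearIndependent_comp_of_le_finrank_span A.col (A.rank_eq_finrank_span_cols ▸ hs)
  have hrank : (A.submatrix id g).rank = s := by
    rw [← rank_transpose]
    simpa using LinearIndependent.rank_matrix (M := (A.submatrix id g)ᵀ) hg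
  obtain ⟨f, hf⟩ := exists_linearIndependent_comp_of_le_finrank_span (A.submatrix id g).row
    (by rw [← rank_eq_finrank_span_row, hrank])
  exact ⟨f, g, ((isUnit_iff_isUnit_det _).mp (linearIndependent_rows_iff_isUnit.mp hf)).ne_zero⟩

theorem det_submatrix_map {R S : Type*} [CommRing R] [CommRing S] (φ : R →+* S)
    (A : Matrix m n R) {s : ℕ} (f : Fin s → m) (g : Fin s → n) :
    ((A.map φ).submatrix f g).det = φ (A.submatrix f g).det := by
  rw [submatrix_map, RingHom.map_det, RingHom.mapMatrix_apply]

theorem rank_map_le_rank_map_of_injective {R K L : Type*} [CommRing R] [Field K] [Field L]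
    [Fintype m] [Fintype n] (A : Matrix m n R) (φ : R →+* K) {ψ : R →+* L}
    (hψ : Function.Injective ψ) : (A.map φ).rank ≤ (A.map ψ).rank := by
  obtain ⟨f, g, hfg⟩ := (A.map φ).exists_det_submatrix_ne_zero_of_le_rank le_rfl
  refine (A.map ψ).le_rank_of_det_submatrix_ne_zero (f := f) (g := g) ?_
  rw [det_submatrix_map] at hfg ⊢
  exact (map_ne_zero_iff ψ hψ).mpr fun h => hfg (by rw [h, map_zero])

end Matrix

namespace MvPolynomial

theorem IsHomogeneous.det {R σ ι : Type*} [CommRing R] [Fintype ι] [DecidableEq ι]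
    {N : Matrix ι ι (MvPolynomial σ R)} (hN : ∀ i j, (N i j).IsHomogeneous 1) :
    N.det.IsHomogeneous (Fintype.card ι) := by
  rw [Matrix.det_apply, ← mem_homogeneousSubmodule]
  refine Submodule.sum_mem _ fun e _ => zsmul_mem ?_ _
  simpa using IsHomogeneous.prod Finset.univ (fun i => N (e i) i) (fun _ => 1)
    fun i _ => hN (e i) i

section LinearForm

variable {R σ : Type*} [CommSemiring R] [Fintype σ]

noncomputable def linearForm : Module.Dual R (σ → R) →ₗ[R] MvPolynomial σ R where
  toFun φ := ∑ s, C (φ (Pi.basisFun R σ s)) * X s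
  map_add' φ ψ := by simp [add_mul, Finset.sum_add_distrib]
  map_smul' c φ := by simp [Finset.mul_sum, smul_eq_C_mul, mul_assoc]

theorem isHomogeneous_linearForm (φ : Module.Dual R (σ → R)) :
    (linearForm φ).IsHomogeneous 1 :=
  IsHomogeneous.sum _ _ _ fun s _ => isHomogeneous_C_mul_X _ s

theorem eval_linearForm (φ : Module.Dual R (σ → R)) (x : σ → R) :
    eval x (linearForm φ) = φ x := by
  conv_rhs => rw [← (Pi.basisFun R σ).sum_repr x]
  simp [linearForm, mul_comm]

theorem linearForm_injective : Function.Injective (linearForm (R := R) (σ := σ)) :=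
  fun φ ψ h => LinearMap.ext fun x => by rw [← eval_linearForm, h, eval_linearForm]

theorem IsHomogeneous.exists_eq_linearForm {p : MvPolynomial σ R} (hp : p.IsHomogeneous 1) :
    ∃ φ, p = linearForm φ := by
  classical
  rw [← mem_homogeneousSubmodule, homogeneousSubmodule_one_eq_span_X] at hp
  obtain ⟨c, rfl⟩ := (Submodule.mem_span_range_iff_exists_fun R).mp hp
  refine ⟨∑ s, c s • LinearMap.proj s, ?_⟩
  simp [linearForm, smul_eq_C_mul, Pi.single_apply]

theorem IsHomogeneous.eq_sum_C_eval_mul_linearForm_coord {ι : Type*} [Fintype ι]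
    (b : Basis ι R (σ → R)) {p : MvPolynomial σ R} (hp : p.IsHomogeneous 1) :
    p = ∑ t, C (eval (b t) p) * linearForm (b.coord t) := by
  obtain ⟨φ, rfl⟩ := hp.exists_eq_linearForm
  simp_rw [eval_linearForm, ← smul_eq_C_mul, ← map_smul, ← map_sum, b.sum_dual_apply_smul_coord]

theorem linearIndependent_linearForm_coord {ι : Type*} [Finite ι] [DecidableEq ι]
    (b : Basis ι R (σ → R)) : LinearIndependent R fun t => linearForm (b.coord t) := by
  rw [← b.coe_dualBasis]
  exact b.dualBasis.linearIndependent.map_injOn _ linearForm_injective.injOn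

end LinearForm

end MvPolynomial

namespace Matrix

variable {K σ F m n : Type*} [Field K] [Field F] [Algebra (MvPolynomial σ K) F]
  [IsFractionRing (MvPolynomial σ K) F] [Fintype m] [Fintype n]

theorem exists_rank_map_eval_eq (M : Matrix m n (MvPolynomial σ K))
    (hM : ∀ i j, (M i j).IsHomogeneous 1)
    (hcard : ((M.map (algebraMap _ F)).rank : Cardinal) ≤ #K) :
    ∃ v : σ → K, (M.map (eval v)).rank = (M.map (algebraMap _ F)).rank := by
  classical
  obtain ⟨f, g, hfg⟩ := (M.map (algebraMap _ F)).exists_det_submatrix_ne_zero_of_le_rank le_rfl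
  rw [det_submatrix_map] at hfg
  have hD : (M.submatrix f g).det.IsHomogeneous _ := IsHomogeneous.det fun i j => hM (f i) (g j)
  obtain ⟨v, hv⟩ : ∃ v, eval v (M.submatrix f g).det ≠ 0 := by
    by_contra! h
    apply hfg
    rw [hD.eq_zero_of_forall_eval_eq_zero_of_le_card h (by simpa using hcard), map_zero]
  refine ⟨v, le_antisymm (M.rank_map_le_rank_map_of_injective _ (IsFractionRing.injective _ _)) ?_⟩
  simpa using (M.map (eval v)).le_rank_of_det_submatrix_ne_zero (f := f) (g := g)
    (by rwa [det_submatrix_map])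

theorem exists_ne_zero_rank_map_eval_eq [Nonempty σ] (M : Matrix m n (MvPolynomial σ K))
    (hM : ∀ i j, (M i j).IsHomogeneous 1)
    (hcard : ((M.map (algebraMap _ F)).rank : Cardinal) ≤ #K) :
    ∃ v : σ → K, v ≠ 0 ∧ (M.map (eval v)).rank = (M.map (algebraMap _ F)).rank := by
  obtain ⟨v, hv⟩ := M.exists_rank_map_eval_eq hM hcard
  by_cases hv0 : v = 0
  · -- `M` vanishes at `0`, so the rank is `0` and any point will do.
    have hzero : M.map (eval 0) = 0 := by
      ext i j
      simpa [constantCoeff_eq] using (hM i j).coeff_eq_zero (d := 0) (by simp)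
    refine ⟨1, one_ne_zero, le_antisymm
      (M.rank_map_le_rank_map_of_injective _ (IsFractionRing.injective _ F)) ?_⟩
    rw [← hv, hv0, hzero, rank_zero]
    exact Nat.zero_le _
  · exact ⟨v, hv0, hv⟩

end Matrix

theorem linear_matrix_normal_form_general {K : Type*} [Field K] {m n : ℕ} (hn : 0 < n)
    (M : Matrix (Fin m) (Fin n) (MvPolynomial (Fin n) K))
    (hlin : ∀ i j, (M i j).IsHomogeneous 1)
    (r : ℕ)
    (hr : r = (M.map (algebraMap (MvPolynomial (Fin n) K)
      (FractionRing (MvPolynomial (Fin n) K)))).rank)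
    (hcard : (r : Cardinal) ≤ Cardinal.mk K) :
    ∃ (S : Matrix (Fin m) (Fin m) K) (T : Matrix (Fin n) (Fin n) K), IsUnit S ∧ IsUnit T ∧
      ∃ Lf : Fin n → MvPolynomial (Fin n) K,
        (∀ t, (Lf t).IsHomogeneous 1) ∧ LinearIndependent K Lf ∧
        ∃ Mc : Fin n → Matrix (Fin m) (Fin n) K,
          (∀ (i : Fin m) (j : Fin n),
            ∑ k1 : Fin m, ∑ k2 : Fin n, C (S i k1) * M k1 k2 * C (T k2 j)
              = ∑ t, C (Mc t i j) * Lf t) ∧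
          (∀ (i : Fin m) (j : Fin n),
            Mc ⟨0, hn⟩ i j = if (i : ℕ) = (j : ℕ) ∧ (i : ℕ) < r then 1 else 0) := by
  have : Nonempty (Fin n) := ⟨⟨0, hn⟩⟩
  obtain ⟨v, hv0, hvr⟩ := M.exists_ne_zero_rank_map_eval_eq hlin (hr ▸ hcard)
  obtain ⟨S, T, hS, hT, hSAT⟩ := (M.map (eval v)).exists_isUnit_mul_mul_eq_ite
  obtain ⟨b, hb⟩ := Basis.exists_apply_eq (finrank_fin_fun K) hv0 ⟨0, hn⟩
  have hN : ∀ i j, (∑ k1, ∑ k2, C (S i k1) * M k1 k2 * C (T k2 j)).IsHomogeneous 1 :=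
    fun i j => IsHomogeneous.sum _ _ _ fun k1 _ => IsHomogeneous.sum _ _ _ fun k2 _ => by
      simpa using ((hlin k1 k2).C_mul (S i k1)).mul (isHomogeneous_C _ (T k2 j))
  refine ⟨S, T, hS, hT, fun t => linearForm (b.coord t), fun t => isHomogeneous_linearForm _,
    linearIndependent_linearForm_coord b,
    fun t => of fun i j => eval (b t) (∑ k1, ∑ k2, C (S i k1) * M k1 k2 * C (T k2 j)),
    fun i j => (hN i j).eq_sum_C_eval_mul_linearForm_coord b, fun i j => ?_⟩
  have hNv : eval v (∑ k1, ∑ k2, C (S i k1) * M k1 k2 * C (T k2 j)) =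
      (S * M.map (eval v) * T) i j := by
    simp [mul_mul_apply_eq_sum]
  simp only [of_apply, hb, hNv, hSAT, hvr, ← hr]

theorem linear_matrix_normal_form {K : Type*} [Field K] {m n : ℕ} (hn : 0 < n)
    (M : Matrix (Fin m) (Fin n) (MvPolynomial (Fin n) K)) (hM0 : M ≠ 0)
    (hlin : ∀ i j, (M i j).IsHomogeneous 1)
    (r : ℕ)
    (hr : r = (M.map (algebraMap (MvPolynomial (Fin n) K)
      (FractionRing (MvPolynomial (Fin n) K)))).rank)
    (hcard : (r : Cardinal) ≤ Cardinal.mk K) :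
    ∃ (S : Matrix (Fin m) (Fin m) K) (T : Matrix (Fin n) (Fin n) K), IsUnit S ∧ IsUnit T ∧
      ∃ Lf : Fin n → MvPolynomial (Fin n) K,
        (∀ t, (Lf t).IsHomogeneous 1) ∧ LinearIndependent K Lf ∧
        ∃ Mc : Fin n → Matrix (Fin m) (Fin n) K,
          (∀ (i : Fin m) (j : Fin n),
            ∑ k1 : Fin m, ∑ k2 : Fin n, C (S i k1) * M k1 k2 * C (T k2 j)
              = ∑ t, C (Mc t i j) * Lf t) ∧
          (∀ (i : Fin m) (j : Fin n),
            Mc ⟨0, hn⟩ i j = if (i : ℕ) = (j : ℕ) ∧ (i : ℕ) < r then 1 else 0) :=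
  linear_matrix_normal_form_general hn M hlin r hr hcard
end

section
/- Let K be a field and define H ∈ K[x₁,…,x₅]⁵ (n ≥ 5) by requiring J H to equal the matrix with rows (0, x₅, 0, 0, 0), (x₄, 0, −x₅, 0, 0), (0, x₄, 0, 0, 0), (0,0,0,0,0), (0,0,0,0,0), e.g. H = (x₂x₅, x₁x₄ − x₃x₅, x₂x₄, 0, 0). Then J H is nilpotent and rk J H = 3 over K(x), yet J H is not similar over K to a triangular matrix. -/
/-!
If `T⁻¹ J T` is lower triangular for a constant invertible `T`, the last column `v` of `T` is a
constant eigenvector of the Jacobian `J`. Since `J` is nilpotent the eigenvalue is `0`, so `J v = 0`;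
but the entries of `J v` are linear forms in the variables whose coefficients are, up to sign,
the entries of `v`, hence `v = 0`, contradicting the invertibility of `T`. The rank is `3` because
the last two rows of `J` vanish and the minor on rows `1, 2, 3` and columns `1, 2, 4` is `-x₂x₄x₅`.
-/

open MvPolynomial Matrix

namespace Matrix

variable {R : Type*} [CommRing R]

theorem eq_zero_of_isNilpotent_of_mulVec_eq_smul [IsDomain R] {n : Type*} [Fintype n]
    [DecidableEq n] {M : Matrix n n R} (hM : IsNilpotent M) {a : R} {v : n → R}
    (hv : M *ᵥ v = a • v) (hv0 : v ≠ 0) : a = 0 :=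
  (Module.End.HasEigenvalue.isNilpotent_of_isNilpotent ((isNilpotent_toLin'_iff M).mpr hM)
    (Module.End.hasEigenvalue_of_hasEigenvector
      ⟨Module.End.mem_eigenspace_iff.mpr (by rwa [toLin'_apply]), hv0⟩)).eq_zero

theorem mulVec_col_last_eq_smul {n : ℕ} {M P S : Matrix (Fin (n + 1)) (Fin (n + 1)) R}
    (hSP : S * P = M * S) (hP : ∀ i j, i < j → P i j = 0) :
    M *ᵥ S.col (Fin.last n) = P (Fin.last n) (Fin.last n) • S.col (Fin.last n) := by
  ext i
  have h := congrFun (congrFun hSP i) (Fin.last n)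
  rw [mul_apply, Fintype.sum_eq_single (Fin.last n)
    fun j hj => by rw [hP j _ (Fin.lt_last_iff_ne_last.mpr hj), mul_zero]] at h
  simp only [mulVec, dotProduct, col_apply, Pi.smul_apply, smul_eq_mul]
  rw [← mul_apply, ← h, mul_comm]

end Matrix

section

variable (K : Type*) [Field K]

noncomputable def exampleJacobian : Matrix (Fin 5) (Fin 5) (MvPolynomial (Fin 5) K) :=
  !![0,   X 4, 0,    0,   X 1;
     X 3, 0,   -X 4, X 0, -X 2;
     0,   X 3, 0,    X 1, 0;
     0,   0,   0,    0,   0;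
     0,   0,   0,    0,   0]

theorem of_pderiv_eq_exampleJacobian :
    (Matrix.of fun i j => pderiv j
      ((![X 1 * X 4, X 0 * X 3 - X 2 * X 4, X 1 * X 3, 0, 0] :
        Fin 5 → MvPolynomial (Fin 5) K) i)) = exampleJacobian K := by
  ext i j : 1
  fin_cases i <;> fin_cases j <;> simp [exampleJacobian, pderiv_X]

theorem exampleJacobian_mul_self : exampleJacobian K * exampleJacobian K =
    !![X 3 * X 4, 0, -(X 4 * X 4), X 0 * X 4,    -(X 2 * X 4);
       0,         0, 0,            -(X 1 * X 4), X 1 * X 3;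
       X 3 * X 3, 0, -(X 3 * X 4), X 0 * X 3,    -(X 2 * X 3);
       0,         0, 0,            0,            0;
       0,         0, 0,            0,            0] := by
  ext i j : 1
  fin_cases i <;> fin_cases j <;> simp [exampleJacobian, mul_apply, Fin.sum_univ_five] <;> ring

theorem exampleJacobian_pow_four : exampleJacobian K ^ 4 = 0 := by
  rw [show 4 = 2 + 2 from rfl, pow_add, sq, exampleJacobian_mul_self]
  ext i j : 1
  fin_cases i <;> fin_cases j <;> simp [mul_apply, Fin.sum_univ_five] <;> ring

theorem det_submatrix_exampleJacobian :
    ((exampleJacobian K).submatrix ![0, 1, 2] ![0, 1, 3]).det = -(X 1 * X 3 * X 4) := by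
  rw [det_fin_three]
  simp [exampleJacobian]
  ring

theorem rank_map_exampleJacobian {L : Type*} [Field L] (φ : MvPolynomial (Fin 5) K →+* L)
    (hφ : Function.Injective φ) : ((exampleJacobian K).map φ).rank = 3 := by
  refine le_antisymm (rank_le_card_of_support_subset _ {0, 1, 2} ?_) ?_
  · intro i
    fin_cases i <;> simp [exampleJacobian, funext_iff, Fin.forall_fin_succ]
  · have hdet : (((exampleJacobian K).map φ).submatrix ![0, 1, 2] ![0, 1, 3]).det ≠ 0 := by
      rw [submatrix_map, ← RingHom.mapMatrix_apply, ← RingHom.map_det,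
        det_submatrix_exampleJacobian, map_ne_zero_iff φ hφ]
      simp [X_ne_zero]
    calc 3 = (((exampleJacobian K).map φ).submatrix ![0, 1, 2] ![0, 1, 3]).rank :=
          (rank_of_isUnit _ ((isUnit_iff_isUnit_det _).mpr hdet.isUnit)).symm
      _ ≤ ((exampleJacobian K).map φ).rank := rank_submatrix_le _ _ _

theorem eq_zero_of_exampleJacobian_mulVec_C_eq_zero {w : Fin 5 → K}
    (h : exampleJacobian K *ᵥ (fun i => C (w i)) = 0) : w = 0 := by
  have hev : ∀ i (x : Fin 5 → K), eval x ((exampleJacobian K *ᵥ fun i => C (w i)) i) = 0 :=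
    fun i x => by rw [h, Pi.zero_apply, map_zero]
  have h0 := hev 1 (Pi.single 3 1)
  have h1 := hev 0 (Pi.single 4 1)
  have h2 := hev 1 (Pi.single 4 1)
  have h3 := hev 2 (Pi.single 1 1)
  have h4 := hev 0 (Pi.single 1 1)
  simp [exampleJacobian, mulVec, dotProduct, Fin.sum_univ_five] at h0 h1 h2 h3 h4
  ext i
  fin_cases i <;> assumption

end

theorem nilpotent_rank_three_not_triangularizable {K : Type*} [Field K] :
    let H : Fin 5 → MvPolynomial (Fin 5) K :=
      ![X 1 * X 4, X 0 * X 3 - X 2 * X 4, X 1 * X 3, 0, 0]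
    let M : Matrix (Fin 5) (Fin 5) (MvPolynomial (Fin 5) K) :=
      Matrix.of fun i j => pderiv j (H i)
    IsNilpotent M ∧
    (M.map (algebraMap (MvPolynomial (Fin 5) K)
      (FractionRing (MvPolynomial (Fin 5) K)))).rank = 3 ∧
    ¬ ∃ (T : Matrix (Fin 5) (Fin 5) K)
        (P : Matrix (Fin 5) (Fin 5) (MvPolynomial (Fin 5) K)),
        IsUnit T ∧ P = (T⁻¹.map C) * M * (T.map C) ∧
        ∀ i j : Fin 5, i < j → P i j = 0 := by
  intro H M
  rw [show M = exampleJacobian K from of_pderiv_eq_exampleJacobian K]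
  have hnil : IsNilpotent (exampleJacobian K) := ⟨4, exampleJacobian_pow_four K⟩
  refine ⟨hnil, rank_map_exampleJacobian K _ (IsFractionRing.injective _ _), ?_⟩
  rintro ⟨T, P, hT, rfl, hP⟩
  have hdet : IsUnit T.det := (isUnit_iff_isUnit_det T).mp hT
  have hcol : T.col 4 ≠ 0 := fun h =>
    hdet.ne_zero (det_eq_zero_of_column_eq_zero 4 (congrFun h))
  have hconj : T.map C * (T⁻¹.map C * exampleJacobian K * T.map C) =
      exampleJacobian K * T.map C := by
    rw [← mul_assoc, ← mul_assoc, ← Matrix.map_mul, mul_nonsing_inv T hdet,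
      Matrix.map_one _ (map_zero C) (map_one C), one_mul]
  have heigen := mulVec_col_last_eq_smul hconj hP
  have hcolC : (T.map (C (σ := Fin 5))).col (Fin.last 4) ≠ 0 := fun h =>
    hcol (_root_.funext fun i => C_injective (Fin 5) K (by simpa using congrFun h i))
  rw [eq_zero_of_isNilpotent_of_mulVec_eq_smul hnil heigen hcolC, zero_smul] at heigen
  exact hcol (eq_zero_of_exampleJacobian_mulVec_C_eq_zero K (w := T.col 4) heigen)
end
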